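/- arXiv:1811.10764 — 6 statements merged into one kernel-verified Lean document; each statement's English description precedes it below -/
import Mathlib

section
/- Let X be a sum of n Bernoulli random variables X_1,...,X_n that are negatively associated, with P(X_i = 1) = p_i, and let μ ≥ E[X] = Σ p_i. Then for every t ≥ 0, P(X ≥ μ + t) ≤ exp(−μ·φ(t/μ)) where φ(x) = (1+x)log(1+x) − x. -/
open MeasureTheory ProbabilityTheory Finset Real

/-! For `λ = log (1 + c)` and a `{0, 1}`-valued `X i`, `exp (λ X i) = 1 + c X i`, so expanding the
product `∏ i, (1 + c X i)` writes `exp (λ ∑ i, X i)` as `∑ s, c ^ #s 𝟙{X i = 1 for all i ∈ s}`.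
Negative association bounds the expectation of each term by `c ^ #s ∏ i ∈ s, p i`, whence
`E[exp (λ ∑ i, X i)] ≤ ∏ i, (1 + c p i) ≤ exp (c ∑ i, p i)`. The Chernoff bound with
`c = t / μ₀` then gives `exp (c μ₀ - λ (μ₀ + t)) = exp (-μ₀ φ (t / μ₀))`. -/

section Bernoulli

variable {Ω ι : Type*} {X : ι → Ω → ℕ}

lemma prod_natCast_eq_indicator (hBer : ∀ i ω, X i ω ≤ 1) (s : Finset ι) (ω : Ω) :
    ∏ i ∈ s, (X i ω : ℝ) = {ω | ∀ i ∈ s, X i ω = 1}.indicator 1 ω := by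
  by_cases h : ∀ i ∈ s, X i ω = 1
  · rw [Set.indicator_of_mem (show ω ∈ {ω | ∀ i ∈ s, X i ω = 1} from h), Pi.one_apply]
    exact prod_eq_one fun i hi => by simp [h i hi]
  · rw [Set.indicator_of_notMem (show ω ∉ {ω | ∀ i ∈ s, X i ω = 1} from h)]
    obtain ⟨i, hi, hne⟩ := not_forall₂.mp h
    exact prod_eq_zero hi (by simp [Nat.lt_one_iff.mp ((hBer i ω).lt_of_ne hne)])

lemma prod_one_add_mul_natCast_eq_sum_indicator (hBer : ∀ i ω, X i ω ≤ 1) (s : Finset ι)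
    (c : ℝ) (ω : Ω) :
    ∏ i ∈ s, (1 + c * (X i ω : ℝ)) =
      ∑ t ∈ s.powerset, c ^ #t * {ω | ∀ i ∈ t, X i ω = 1}.indicator 1 ω := by
  simp_rw [prod_one_add, prod_mul_distrib, prod_const, prod_natCast_eq_indicator hBer]

lemma exp_log_one_add_mul_sum_natCast (hBer : ∀ i ω, X i ω ≤ 1) (s : Finset ι) {c : ℝ}
    (hc : 0 < 1 + c) (ω : Ω) :
    exp (log (1 + c) * ∑ i ∈ s, (X i ω : ℝ)) = ∏ i ∈ s, (1 + c * (X i ω : ℝ)) := by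
  rw [mul_sum, exp_sum]
  refine prod_congr rfl fun i _ => ?_
  rcases Nat.le_one_iff_eq_zero_or_eq_one.mp (hBer i ω) with h | h <;> simp [h, exp_log hc]

variable [MeasurableSpace Ω]

lemma measurableSet_forall_eq_one (hmeas : ∀ i, Measurable (X i)) (s : Finset ι) :
    MeasurableSet {ω | ∀ i ∈ s, X i ω = 1} := by
  simp only [Set.ofPred_forall]
  exact .biInter s.countable_toSet fun i _ => hmeas i (measurableSet_singleton 1)

variable {μ : Measure Ω} [IsFiniteMeasure μ]

lemma integrable_exp_log_one_add_mul_sum_natCast (hmeas : ∀ i, Measurable (X i))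
    (hBer : ∀ i ω, X i ω ≤ 1) (s : Finset ι) {c : ℝ} (hc : 0 < 1 + c) :
    Integrable (fun ω => exp (log (1 + c) * ∑ i ∈ s, (X i ω : ℝ))) μ := by
  simp_rw [exp_log_one_add_mul_sum_natCast hBer s hc,
    prod_one_add_mul_natCast_eq_sum_indicator hBer]
  exact integrable_finsetSum _ fun t _ =>
    ((integrable_const 1).indicator (measurableSet_forall_eq_one hmeas t)).const_mul _

lemma integral_prod_one_add_mul_natCast_le (hmeas : ∀ i, Measurable (X i))
    (hBer : ∀ i ω, X i ω ≤ 1)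
    (hNA : ∀ s : Finset ι, μ {ω | ∀ i ∈ s, X i ω = 1} ≤ ∏ i ∈ s, μ {ω | X i ω = 1})
    (s : Finset ι) {c : ℝ} (hc : 0 ≤ c) :
    ∫ ω, ∏ i ∈ s, (1 + c * (X i ω : ℝ)) ∂μ ≤ ∏ i ∈ s, (1 + c * μ.real {ω | X i ω = 1}) := by
  have hNA_real (t : Finset ι) :
      μ.real {ω | ∀ i ∈ t, X i ω = 1} ≤ ∏ i ∈ t, μ.real {ω | X i ω = 1} := by
    simpa [measureReal_def, ENNReal.toReal_prod] using
      ENNReal.toReal_mono (ENNReal.prod_ne_top fun i _ => measure_ne_top μ _) (hNA t)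
  simp_rw [prod_one_add_mul_natCast_eq_sum_indicator hBer, prod_one_add, prod_mul_distrib,
    prod_const]
  rw [integral_finsetSum _ fun t _ =>
    ((integrable_const 1).indicator (measurableSet_forall_eq_one hmeas t)).const_mul _]
  simp_rw [integral_const_mul, integral_indicator_one (measurableSet_forall_eq_one hmeas _)]
  exact sum_le_sum fun t _ => mul_le_mul_of_nonneg_left (hNA_real t) (pow_nonneg hc _)

lemma mgf_sum_natCast_le (hmeas : ∀ i, Measurable (X i)) (hBer : ∀ i ω, X i ω ≤ 1)
    (hNA : ∀ s : Finset ι, μ {ω | ∀ i ∈ s, X i ω = 1} ≤ ∏ i ∈ s, μ {ω | X i ω = 1})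
    (s : Finset ι) {c : ℝ} (hc : 0 ≤ c) :
    mgf (fun ω => ∑ i ∈ s, (X i ω : ℝ)) μ (log (1 + c)) ≤
      exp (c * ∑ i ∈ s, μ.real {ω | X i ω = 1}) := by
  simp_rw [mgf, exp_log_one_add_mul_sum_natCast hBer s (by linarith : 0 < 1 + c), mul_sum]
  exact (integral_prod_one_add_mul_natCast_le hmeas hBer hNA s hc).trans
    (prod_one_add_le_exp_sum s fun i => mul_nonneg hc measureReal_nonneg)

end Bernoulli

/-- Chernoff-type bound for sums of negatively associated Bernoulli random variables. -/
theorem neg_assoc_bernoulli_chernoff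
    {Ω : Type*} [MeasurableSpace Ω] (μ : Measure Ω) [IsProbabilityMeasure μ]
    (n : ℕ) (X : Fin n → Ω → ℕ)
    (hmeas : ∀ i, Measurable (X i))
    (hBer : ∀ i ω, X i ω ≤ 1)
    (hNA : ∀ s : Finset (Fin n),
      μ {ω | ∀ i ∈ s, X i ω = 1} ≤ ∏ i ∈ s, μ {ω | X i ω = 1})
    (μ0 t : ℝ)
    (hμ0 : (∑ i, (μ {ω | X i ω = 1}).toReal) ≤ μ0)
    (ht : 0 ≤ t) :
    (μ {ω | μ0 + t ≤ ∑ i, (X i ω : ℝ)}).toReal ≤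
      Real.exp (-μ0 * ((1 + t / μ0) * Real.log (1 + t / μ0) - t / μ0)) := by
  rcases ((sum_nonneg fun i _ => ENNReal.toReal_nonneg).trans hμ0).eq_or_lt with rfl | hμ0_pos
  · exact measureReal_le_one.trans (by simp)
  set c := t / μ0
  have hc : 0 ≤ c := div_nonneg ht hμ0_pos.le
  have hct : c * μ0 = t := div_mul_cancel₀ t hμ0_pos.ne'
  calc μ.real {ω | μ0 + t ≤ ∑ i, (X i ω : ℝ)}
      ≤ exp (-log (1 + c) * (μ0 + t)) * mgf (fun ω => ∑ i, (X i ω : ℝ)) μ (log (1 + c)) :=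
        measure_ge_le_exp_mul_mgf _ (log_nonneg (by linarith))
          (integrable_exp_log_one_add_mul_sum_natCast hmeas hBer _ (by linarith))
    _ ≤ exp (-log (1 + c) * (μ0 + t)) * exp (c * μ0) := by
        gcongr
        exact (mgf_sum_natCast_le hmeas hBer hNA _ hc).trans (exp_le_exp.2 (by gcongr; exact hμ0))
    _ = exp (-μ0 * ((1 + c) * log (1 + c) - c)) := by
        rw [← exp_add]
        congr 1
        linear_combination log (1 + c) * hct
end

section
/- Let X_1,...,X_n be negatively associated Bernoulli random variables. Then for every k ≥ 0, E[binom(X, k)] ≤ (Σ_i P(X_i=1))^k / k!, where X = Σ_i X_i. -/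
/-!
For 0/1-valued `Xᵢ`, `binom(∑ Xᵢ, k)` counts the `k`-sets of indices on which all `Xᵢ = 1`, so
`E[binom(X, k)] = ∑_{|S| = k} P(Xᵢ = 1 for all i ∈ S)`. Negative association bounds each term by
`∏_{i ∈ S} pᵢ`, and the elementary symmetric sum `e_k(p)` is at most `(∑ pᵢ)^k / k!`: multiplying
`e_k(p)` by `∑ pᵢ` produces every `(k+1)`-set `k+1` times, plus nonnegative extra terms.
-/

open MeasureTheory Finset

theorem Nat.eq_ite_of_le_one {n : ℕ} (hn : n ≤ 1) : n = if n = 1 then 1 else 0 := by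
  rcases Nat.le_one_iff_eq_zero_or_eq_one.mp hn with h | h <;> simp [h]

namespace Finset

variable {ι : Type*}

theorem prod_eq_ite_of_le_one {t : Finset ι} {x : ι → ℕ}
    (hx : ∀ i ∈ t, x i ≤ 1) : ∏ i ∈ t, x i = if ∀ i ∈ t, x i = 1 then 1 else 0 := by
  rw [← prod_boole]
  exact prod_congr rfl fun i hi => Nat.eq_ite_of_le_one (hx i hi)

theorem choose_sum_eq_sum_powersetCard_prod {s : Finset ι} {x : ι → ℕ}
    (hx : ∀ i ∈ s, x i ≤ 1) (k : ℕ) :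
    (∑ i ∈ s, x i).choose k = ∑ t ∈ s.powersetCard k, ∏ i ∈ t, x i := by
  classical
  have hsum : ∑ i ∈ s, x i = #(s.filter (x · = 1)) := by
    rw [card_filter]
    exact sum_congr rfl fun i hi => Nat.eq_ite_of_le_one (hx i hi)
  have hsub : (s.powersetCard k).filter (fun t => ∀ i ∈ t, x i = 1) =
      (s.filter (x · = 1)).powersetCard k := by
    ext t
    simp only [mem_filter, mem_powersetCard, subset_iff]
    grind
  rw [hsum, ← card_powersetCard, ← hsub, card_filter]
  exact sum_congr rfl fun t ht =>
    (prod_eq_ite_of_le_one fun i hi => hx i ((mem_powersetCard.mp ht).1 hi)).symm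

theorem sum_powersetCard_sum_sdiff_insert {β : Type*} [AddCommMonoid β] [DecidableEq ι]
    (s : Finset ι) (k : ℕ) (g : Finset ι → β) :
    ∑ t ∈ s.powersetCard k, ∑ i ∈ s \ t, g (insert i t) =
      ∑ u ∈ s.powersetCard (k + 1), (k + 1) • g u := by
  have hcard : ∀ u ∈ s.powersetCard (k + 1), (k + 1) • g u = ∑ _i ∈ u, g u := by
    intro u hu
    rw [sum_const, (mem_powersetCard.mp hu).2]
  rw [sum_congr rfl hcard, sum_sigma', sum_sigma']
  refine sum_bij' (fun p _ => ⟨insert p.2 p.1, p.2⟩) (fun q _ => ⟨q.1.erase q.2, q.2⟩)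
    ?_ ?_ ?_ ?_ (fun _ _ => rfl)
  · rintro ⟨t, i⟩ hp
    simp only [mem_sigma, mem_powersetCard, mem_sdiff] at hp ⊢
    obtain ⟨⟨hts, htc⟩, his, hit⟩ := hp
    exact ⟨⟨insert_subset his hts, by rw [card_insert_of_notMem hit, htc]⟩, mem_insert_self _ _⟩
  · rintro ⟨u, i⟩ hq
    simp only [mem_sigma, mem_powersetCard, mem_sdiff] at hq ⊢
    obtain ⟨⟨hus, huc⟩, hiu⟩ := hq
    refine ⟨⟨(erase_subset _ _).trans hus, ?_⟩, hus hiu, notMem_erase _ _⟩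
    rw [card_erase_of_mem hiu, huc, Nat.add_sub_cancel]
  · rintro ⟨t, i⟩ hp
    simp only [mem_sigma, mem_sdiff] at hp
    simp [erase_insert hp.2.2]
  · rintro ⟨u, i⟩ hq
    simp only [mem_sigma] at hq
    simp [insert_erase hq.2]

theorem factorial_mul_sum_powersetCard_prod_le {R : Type*} [CommSemiring R] [PartialOrder R]
    [IsOrderedRing R] (s : Finset ι) {f : ι → R} (hf : ∀ i ∈ s, 0 ≤ f i) (k : ℕ) :
    (k.factorial : R) * ∑ t ∈ s.powersetCard k, ∏ j ∈ t, f j ≤ (∑ i ∈ s, f i) ^ k := by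
  classical
  induction k with
  | zero => simp
  | succ k ih =>
    have hprod_nonneg : ∀ t ∈ s.powersetCard k, 0 ≤ ∏ j ∈ t, f j := fun t ht =>
      prod_nonneg fun j hj => hf j ((mem_powersetCard.mp ht).1 hj)
    have hdouble : ((k + 1 : ℕ) : R) * ∑ u ∈ s.powersetCard (k + 1), ∏ j ∈ u, f j =
        ∑ t ∈ s.powersetCard k, (∑ i ∈ s \ t, f i) * ∏ j ∈ t, f j := by
      have hinsert : ∀ t ∈ s.powersetCard k, ∀ i ∈ s \ t,
          f i * ∏ j ∈ t, f j = ∏ j ∈ insert i t, f j := fun t _ i hi =>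
        (prod_insert (mem_sdiff.mp hi).2).symm
      simp_rw [sum_mul]
      rw [sum_congr rfl fun t ht => sum_congr rfl (hinsert t ht),
        sum_powersetCard_sum_sdiff_insert s k (fun u => ∏ j ∈ u, f j), mul_sum]
      simp only [nsmul_eq_mul, Nat.cast_add, Nat.cast_one]
    calc ((k + 1).factorial : R) * ∑ u ∈ s.powersetCard (k + 1), ∏ j ∈ u, f j
        = (k.factorial : R) * ∑ t ∈ s.powersetCard k, (∑ i ∈ s \ t, f i) * ∏ j ∈ t, f j := by
          rw [Nat.factorial_succ, Nat.cast_mul, mul_comm ((k + 1 : ℕ) : R), mul_assoc, hdouble]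
      _ ≤ (k.factorial : R) * ∑ t ∈ s.powersetCard k, (∑ i ∈ s, f i) * ∏ j ∈ t, f j := by
          gcongr with t ht
          · exact hprod_nonneg t ht
          · exact fun i hi _ => hf i hi
          · exact sdiff_subset
      _ = (∑ i ∈ s, f i) * ((k.factorial : R) * ∑ t ∈ s.powersetCard k, ∏ j ∈ t, f j) := by
          rw [← mul_sum, mul_left_comm]
      _ ≤ (∑ i ∈ s, f i) ^ (k + 1) := by
          rw [pow_succ']
          exact mul_le_mul_of_nonneg_left ih (sum_nonneg hf)

end Finset

theorem integral_choose_sum_eq_sum_measureReal {Ω ι : Type*} [MeasurableSpace Ω]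
    (μ : Measure Ω) [IsFiniteMeasure μ] {s : Finset ι} {X : ι → Ω → ℕ}
    (hmeas : ∀ i ∈ s, Measurable (X i)) (hBer : ∀ i ∈ s, ∀ ω, X i ω ≤ 1) (k : ℕ) :
    ∫ ω, (((∑ i ∈ s, X i ω).choose k : ℕ) : ℝ) ∂μ =
      ∑ t ∈ s.powersetCard k, μ.real {ω | ∀ i ∈ t, X i ω = 1} := by
  have hE : ∀ t ∈ s.powersetCard k, MeasurableSet {ω | ∀ i ∈ t, X i ω = 1} := by
    intro t ht
    simp only [Set.ofPred_forall]
    exact Finset.measurableSet_biInter t fun i hi =>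
      hmeas i ((mem_powersetCard.mp ht).1 hi) (measurableSet_singleton 1)
  have hind : ∀ ω, (((∑ i ∈ s, X i ω).choose k : ℕ) : ℝ) =
      ∑ t ∈ s.powersetCard k, {ω | ∀ i ∈ t, X i ω = 1}.indicator 1 ω := by
    intro ω
    rw [choose_sum_eq_sum_powersetCard_prod fun i hi => hBer i hi ω, Nat.cast_sum]
    refine sum_congr rfl fun t ht => ?_
    rw [prod_eq_ite_of_le_one fun i hi => hBer i ((mem_powersetCard.mp ht).1 hi) ω]
    simp [Set.indicator]
  simp_rw [hind]
  rw [integral_finsetSum _ fun t ht => (integrable_const 1).indicator (hE t ht)]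
  exact sum_congr rfl fun t ht => integral_indicator_one (hE t ht)

/-- For negatively associated Bernoulli random variables,
`E[binom(X, k)] ≤ (∑ pᵢ)^k / k!` where `X = ∑ Xᵢ`. -/
theorem neg_assoc_bernoulli_binom_expectation
    {Ω : Type*} [MeasurableSpace Ω] (μ : Measure Ω) [IsProbabilityMeasure μ]
    (n : ℕ) (X : Fin n → Ω → ℕ)
    (hmeas : ∀ i, Measurable (X i))
    (hBer : ∀ i ω, X i ω ≤ 1)
    (hNA : ∀ s : Finset (Fin n),
      μ {ω | ∀ i ∈ s, X i ω = 1} ≤ ∏ i ∈ s, μ {ω | X i ω = 1})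
    (k : ℕ) :
    ∫ ω, (((∑ i, X i ω).choose k : ℕ) : ℝ) ∂μ ≤
      (∑ i, (μ {ω | X i ω = 1}).toReal) ^ k / (k.factorial : ℝ) := by
  rw [integral_choose_sum_eq_sum_measureReal μ (fun i _ => hmeas i) (fun i _ => hBer i) k,
    le_div_iff₀ (by positivity), mul_comm]
  calc (k.factorial : ℝ) * ∑ t ∈ univ.powersetCard k, μ.real {ω | ∀ i ∈ t, X i ω = 1}
      ≤ (k.factorial : ℝ) * ∑ t ∈ univ.powersetCard k, ∏ i ∈ t, (μ {ω | X i ω = 1}).toReal := by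
        gcongr with t
        rw [measureReal_def, ← ENNReal.toReal_prod]
        exact ENNReal.toReal_mono (ENNReal.prod_ne_top fun i _ => measure_ne_top μ _) (hNA t)
    _ ≤ (∑ i, (μ {ω | X i ω = 1}).toReal) ^ k :=
        factorial_mul_sum_powersetCard_prod_le _ (fun _ _ => ENNReal.toReal_nonneg) k
end

section
/- (Kantorovich–Schweitzer inequality) If 0 < x ≤ x_i ≤ X for i = 1,...,n and ξ_i ≥ 0 with Σ_i ξ_i = 1, then (Σ_i ξ_i x_i)·(Σ_i ξ_i x_i^{−1}) ≤ (X + x)²/(4 X x). -/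
open Finset

/-- Kantorovich–Schweitzer inequality. -/
theorem kantorovich_schweitzer (n : ℕ) (x X : ℝ) (xv ξ : Fin n → ℝ)
    (hx : 0 < x) (hxX : x ≤ X)
    (hbound : ∀ i, x ≤ xv i ∧ xv i ≤ X)
    (hξ : ∀ i, 0 ≤ ξ i) (hsum : ∑ i, ξ i = 1) :
    (∑ i, ξ i * xv i) * (∑ i, ξ i * (xv i)⁻¹) ≤ (X + x) ^ 2 / (4 * X * x) := by
  have hX : 0 < X := lt_of_lt_of_le hx hxX
  have hXx : 0 < X * x := mul_pos hX hx
  set S₁ := ∑ i, ξ i * xv i with hS₁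
  set S₂ := ∑ i, ξ i * (xv i)⁻¹ with hS₂
  have hS₁nn : 0 ≤ S₁ := Finset.sum_nonneg fun i _ =>
    mul_nonneg (hξ i) (le_trans hx.le (hbound i).1)
  have hkey : ∀ i : Fin n, ξ i * (xv i)⁻¹ ≤ ξ i * ((X + x - xv i) / (X * x)) := by
    intro i
    obtain ⟨h1, h2⟩ := hbound i
    have hxi : 0 < xv i := lt_of_lt_of_le hx h1
    have : (xv i)⁻¹ ≤ (X + x - xv i) / (X * x) := by
      rw [inv_eq_one_div, div_le_div_iff₀ hxi hXx]
      nlinarith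
    exact mul_le_mul_of_nonneg_left this (hξ i)
  have hS₂le : S₂ ≤ (X + x - S₁) / (X * x) := by
    calc S₂ ≤ ∑ i, ξ i * ((X + x - xv i) / (X * x)) :=
          Finset.sum_le_sum fun i _ => hkey i
      _ = (X + x - S₁) / (X * x) := by
          rw [hS₁, eq_div_iff (ne_of_gt hXx), Finset.sum_mul]
          have he : ∀ i : Fin n,
              ξ i * ((X + x - xv i) / (X * x)) * (X * x) = ξ i * (X + x) - ξ i * xv i := by
            intro i; field_simp
          simp_rw [he]
          rw [Finset.sum_sub_distrib, ← Finset.sum_mul, hsum]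
          ring
  have h2 : S₁ * S₂ ≤ S₁ * ((X + x - S₁) / (X * x)) :=
    mul_le_mul_of_nonneg_left hS₂le hS₁nn
  have h3 : S₁ * ((X + x - S₁) / (X * x)) ≤ (X + x) ^ 2 / (4 * X * x) := by
    rw [mul_div_assoc', div_le_div_iff₀ hXx (by positivity)]
    nlinarith [sq_nonneg (2 * S₁ - (X + x))]
  linarith
end

section
/- Let A = {a_1,...,a_μ} with a_i ∈ [δn, n] for δ ∈ (0,1]. Then (Σ_{a∈A} a^{−1}) / (Σ_{a∈A} a^{−1/2})² ≤ μ^{−1} · (1 + √δ)² / (4√δ). -/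
/-!
Put `x = a^{-1/2}`, so that every `x` lies in `[m, M] = [n^{-1/2}, (δn)^{-1/2}]`.
Then `(x - m)(M - x) ≥ 0` bounds `∑ x²` by the linear expression `(m + M) ∑ x - mMμ`,
and AM-GM bounds that by `(m + M)²/(4mM) · (∑ x)²/μ` (the Pólya–Szegő form of the
Kantorovich inequality). The constant is scale invariant and equals `(1 + √δ)²/(4√δ)`.
-/

open Finset

lemma sq_le_add_mul_sub_mul {m M x : ℝ} (hm : m ≤ x) (hM : x ≤ M) :
    x ^ 2 ≤ (m + M) * x - m * M := by
  nlinarith [mul_nonneg (sub_nonneg.2 hm) (sub_nonneg.2 hM)]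

lemma add_mul_sub_mul_le_sq_div {m M S k : ℝ} (hm : 0 < m) (hM : 0 < M) (hk : 0 < k) :
    (m + M) * S - m * M * k ≤ (m + M) ^ 2 / (4 * m * M) * (S ^ 2 / k) := by
  rw [div_mul_div_comm, le_div_iff₀ (by positivity)]
  nlinarith [sq_nonneg ((m + M) * S - 2 * m * M * k)]

variable {ι : Type*} {s : Finset ι} {f : ι → ℝ} {m M : ℝ}

lemma sum_sq_le_of_mem_Icc (hf : ∀ i ∈ s, f i ∈ Set.Icc m M) :
    ∑ i ∈ s, f i ^ 2 ≤ (m + M) * ∑ i ∈ s, f i - m * M * #s := by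
  calc ∑ i ∈ s, f i ^ 2 ≤ ∑ i ∈ s, ((m + M) * f i - m * M) :=
        sum_le_sum fun i hi => sq_le_add_mul_sub_mul (hf i hi).1 (hf i hi).2
    _ = (m + M) * ∑ i ∈ s, f i - m * M * #s := by
        rw [sum_sub_distrib, ← mul_sum, sum_const, nsmul_eq_mul, mul_comm (#s : ℝ)]

theorem sum_sq_div_sq_sum_le_of_mem_Icc (hm : 0 < m) (hf : ∀ i ∈ s, f i ∈ Set.Icc m M) :
    (∑ i ∈ s, f i ^ 2) / (∑ i ∈ s, f i) ^ 2 ≤ (#s : ℝ)⁻¹ * ((m + M) ^ 2 / (4 * m * M)) := by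
  rcases s.eq_empty_or_nonempty with rfl | hs
  · simp
  obtain ⟨i, hi⟩ := hs
  have hM : 0 < M := hm.trans_le <| (hf i hi).1.trans (hf i hi).2
  have hk : (0 : ℝ) < #s := by exact_mod_cast card_pos.2 ⟨i, hi⟩
  have hS : 0 < ∑ i ∈ s, f i := sum_pos (fun j hj => hm.trans_le (hf j hj).1) ⟨i, hi⟩
  rw [div_le_iff₀ (by positivity)]
  calc ∑ i ∈ s, f i ^ 2 ≤ (m + M) * ∑ i ∈ s, f i - m * M * #s := sum_sq_le_of_mem_Icc hf
    _ ≤ (m + M) ^ 2 / (4 * m * M) * ((∑ i ∈ s, f i) ^ 2 / #s) :=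
        add_mul_sub_mul_le_sq_div hm hM hk
    _ = (#s : ℝ)⁻¹ * ((m + M) ^ 2 / (4 * m * M)) * (∑ i ∈ s, f i) ^ 2 := by ring

theorem kantorovich_application_general (A : Finset ℝ) (μn : ℕ) (n δ : ℝ)
    (hcard : A.card = μn)
    (hδ0 : 0 < δ) (hn : 0 < n)
    (hA : ∀ a ∈ A, δ * n ≤ a ∧ a ≤ n) :
    (∑ a ∈ A, a⁻¹) / (∑ a ∈ A, (Real.sqrt a)⁻¹) ^ 2 ≤
      (μn : ℝ)⁻¹ * ((1 + Real.sqrt δ) ^ 2 / (4 * Real.sqrt δ)) := by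
  have hδn : 0 < δ * n := mul_pos hδ0 hn
  have hbounds : ∀ a ∈ A, (Real.sqrt a)⁻¹ ∈ Set.Icc (Real.sqrt n)⁻¹ (Real.sqrt (δ * n))⁻¹ :=
    fun a ha => ⟨inv_anti₀ (Real.sqrt_pos.2 (hδn.trans_le (hA a ha).1))
        (Real.sqrt_le_sqrt (hA a ha).2),
      inv_anti₀ (Real.sqrt_pos.2 hδn) (Real.sqrt_le_sqrt (hA a ha).1)⟩
  have hsq : ∀ a ∈ A, a⁻¹ = (Real.sqrt a)⁻¹ ^ 2 := fun a ha => by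
    rw [inv_pow, Real.sq_sqrt (hδn.le.trans (hA a ha).1)]
  have hconst : ((Real.sqrt n)⁻¹ + (Real.sqrt (δ * n))⁻¹) ^ 2 /
      (4 * (Real.sqrt n)⁻¹ * (Real.sqrt (δ * n))⁻¹) = (1 + Real.sqrt δ) ^ 2 / (4 * Real.sqrt δ) := by
    have : Real.sqrt δ * Real.sqrt n ≠ 0 := by positivity
    rw [Real.sqrt_mul hδ0.le]
    field_simp
    ring
  rw [sum_congr rfl hsq, ← hconst, ← hcard]
  exact sum_sq_div_sq_sum_le_of_mem_Icc (inv_pos.2 (Real.sqrt_pos.2 hn)) hbounds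

/-- For a set `A` of `μn` reals all lying in `[δn, n]`,
`(∑_{a∈A} a⁻¹) / (∑_{a∈A} a^{-1/2})² ≤ μn⁻¹ (1+√δ)²/(4√δ)`. -/
theorem kantorovich_application (A : Finset ℝ) (μn : ℕ) (n δ : ℝ)
    (hcard : A.card = μn) (hμpos : 0 < μn)
    (hδ0 : 0 < δ) (hδ1 : δ ≤ 1) (hn : 0 < n)
    (hA : ∀ a ∈ A, δ * n ≤ a ∧ a ≤ n) :
    (∑ a ∈ A, a⁻¹) / (∑ a ∈ A, (Real.sqrt a)⁻¹) ^ 2 ≤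
      (μn : ℝ)⁻¹ * ((1 + Real.sqrt δ) ^ 2 / (4 * Real.sqrt δ)) :=
  kantorovich_application_general A μn n δ hcard hδ0 hn hA
end

section
/- For N ≥ μ + ν > 0 (μ, ν positive integers), define h(μ,ν) = 4(√(N−ν) − √(N−μ−ν))(√N − √(N−ν)). Then h(μ,ν) ≤ h(ν,μ) if and only if μ ≥ ν. -/
/-- With `h(μ,ν) = 4(√(N-ν) - √(N-μ-ν))(√N - √(N-ν))`,
`h(μ,ν) ≤ h(ν,μ)` if and only if `μ ≥ ν`. -/
theorem h_comparison (N μ ν : ℝ) (hμ : 0 < μ) (hν : 0 < ν) (hN : μ + ν ≤ N) :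
    (4 * (Real.sqrt (N - ν) - Real.sqrt (N - μ - ν)) * (Real.sqrt N - Real.sqrt (N - ν)) ≤
      4 * (Real.sqrt (N - μ) - Real.sqrt (N - ν - μ)) * (Real.sqrt N - Real.sqrt (N - μ)))
      ↔ ν ≤ μ := by
  have hrw : N - ν - μ = N - μ - ν := by ring
  rw [hrw]
  set a := Real.sqrt N with ha
  set b := Real.sqrt (N - μ) with hb
  set c := Real.sqrt (N - ν) with hc
  set d := Real.sqrt (N - μ - ν) with hd
  have hNμ : 0 ≤ N - μ := by linarith
  have hNν : 0 ≤ N - ν := by linarith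
  have hNμν : 0 ≤ N - μ - ν := by linarith
  have hN0 : 0 ≤ N := by linarith
  have ha2 : a ^ 2 = N := Real.sq_sqrt hN0
  have hb2 : b ^ 2 = N - μ := Real.sq_sqrt hNμ
  have hc2 : c ^ 2 = N - ν := Real.sq_sqrt hNν
  have hd2 : d ^ 2 = N - μ - ν := Real.sq_sqrt hNμν
  have hane : 0 ≤ a := Real.sqrt_nonneg _
  have hbne : 0 ≤ b := Real.sqrt_nonneg _
  have hcne : 0 ≤ c := Real.sqrt_nonneg _
  have hdne : 0 ≤ d := Real.sqrt_nonneg _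
  -- ad < bc
  have had : a * d = Real.sqrt (N * (N - μ - ν)) := by
    rw [ha, hd, ← Real.sqrt_mul hN0]
  have hbc : b * c = Real.sqrt ((N - μ) * (N - ν)) := by
    rw [hb, hc, ← Real.sqrt_mul hNμ]
  have hlt : a * d < b * c := by
    rw [had, hbc]
    apply Real.sqrt_lt_sqrt (by positivity)
    nlinarith [mul_pos hμ hν]
  -- a + d < b + c
  have hsum : a + d < b + c := by
    nlinarith [sq_nonneg (a + d), sq_nonneg (b + c)]
  constructor
  · intro h
    have key : 0 ≤ (b - c) * (a + d - b - c) := by nlinarith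
    have hbc' : b ≤ c := by nlinarith
    nlinarith
  · intro h
    have hbc' : b ≤ c := Real.sqrt_le_sqrt (by linarith)
    nlinarith
end

section
/- In the preferential attachment graph process G_1^t with vertices arriving one at a time, fix a vertex r that forms a self-loop at its arrival (so its tree has total degree 2X(t) where X(t) is the size of the isolated tree component of G_1^t rooted at r, X(r) = 1). Given G_1^t, X(t+1) = X(t)+1 with probability 2X(t)/(2t+1) and X(t+1) = X(t) otherwise. Then for every positive integer ℓ, the process M(t) = X(t)(X(t)+1)···(X(t)+ℓ−1) / ∏_{j=0}^{ℓ−1}(2(t+j)+1), for t ≥ r, is a martingale with respect to the natural filtration. -/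
/-!
Since `X` moves by `0` or `+1`, a process `g t (X t)` is a martingale as soon as `g` is
space-time harmonic for the jump probability `p`:
`g t x = g (t+1) x + (g (t+1) (x+1) - g (t+1) x) * p t x`.
For `g t x = x^(ℓ) / ∏_{j<ℓ} (2(t+j)+1)` and `p t x = 2x/(2t+1)` this follows from
`(x+1)^(ℓ) x = x^(ℓ) (x+ℓ)` and the analogous shift of the odd product.
Integrability is automatic because `X (r+s) ≤ s+1`.
-/

open MeasureTheory Finset

lemma prod_add_div_prod_odd_harmonic (ℓ : ℕ) (x T : ℝ) (hT : 0 ≤ T) :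
    (∏ j ∈ range ℓ, (x + j)) / ∏ j ∈ range ℓ, (2 * (T + j) + 1) =
      (∏ j ∈ range ℓ, (x + j)) / ∏ j ∈ range ℓ, (2 * (T + 1 + j) + 1) +
        ((∏ j ∈ range ℓ, (x + 1 + j)) / ∏ j ∈ range ℓ, (2 * (T + 1 + j) + 1) -
          (∏ j ∈ range ℓ, (x + j)) / ∏ j ∈ range ℓ, (2 * (T + 1 + j) + 1)) *
            (2 * x / (2 * T + 1)) := by
  have hP : (∏ j ∈ range ℓ, (x + 1 + j)) * x = (∏ j ∈ range ℓ, (x + j)) * (x + ℓ) := by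
    have := (prod_range_succ' (fun j : ℕ => x + j) ℓ).symm.trans (prod_range_succ _ ℓ)
    simpa [add_assoc, add_comm (1:ℝ)] using this
  have hD : (∏ j ∈ range ℓ, (2 * (T + 1 + j) + 1)) * (2 * T + 1) =
      (∏ j ∈ range ℓ, (2 * (T + j) + 1)) * (2 * (T + ℓ) + 1) := by
    have := (prod_range_succ' (fun j : ℕ => 2 * (T + j) + 1) ℓ).symm.trans (prod_range_succ _ ℓ)
    simpa [add_assoc, add_comm (1:ℝ)] using this
  have hD0 : ∏ j ∈ range ℓ, (2 * (T + j) + 1) ≠ 0 := (prod_pos fun j _ => by positivity).ne'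
  have hD1 : ∏ j ∈ range ℓ, (2 * (T + 1 + j) + 1) ≠ 0 :=
    (prod_pos fun j _ => by positivity).ne'
  have hT1 : 2 * T + 1 ≠ 0 := by positivity
  -- keeps `field_simp` from distributing over the products
  generalize ∏ j ∈ range ℓ, (x + 1 + j) = P₁ at *
  generalize ∏ j ∈ range ℓ, (x + j) = P at *
  generalize ∏ j ∈ range ℓ, (2 * (T + 1 + j) + 1) = D₁ at *
  generalize ∏ j ∈ range ℓ, (2 * (T + j) + 1) = D at *
  field_simp
  linear_combination P * hD - 2 * D * hP

section StepChain

variable {Ω : Type*} {m m0 : MeasurableSpace Ω} {μ : Measure Ω}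

lemma integrable_comp_of_ae_le [IsFiniteMeasure μ] {Y : Ω → ℕ} (hY : Measurable Y) {C : ℕ}
    (hC : ∀ᵐ ω ∂μ, Y ω ≤ C) (f : ℕ → ℝ) : Integrable (fun ω => f (Y ω)) μ := by
  refine Integrable.mono' (integrable_const (∑ n ∈ range (C + 1), |f n|))
    (measurable_from_nat.comp hY).aestronglyMeasurable ?_
  filter_upwards [hC] with ω hω
  exact single_le_sum (f := fun n => |f n|) (fun n _ => abs_nonneg _) (mem_range.2 (by omega))

lemma ae_le_add_of_step_le_one {X : ℕ → Ω → ℕ} {C : ℕ} (h₀ : ∀ᵐ ω ∂μ, X 0 ω ≤ C)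
    (hstep : ∀ t, ∀ᵐ ω ∂μ, X (t + 1) ω = X t ω + 1 ∨ X (t + 1) ω = X t ω) (t : ℕ) :
    ∀ᵐ ω ∂μ, X t ω ≤ C + t := by
  induction t with
  | zero => simpa using h₀
  | succ t ih =>
    filter_upwards [ih, hstep t] with ω hle hω
    omega

theorem condExp_comp_of_step_le_one [IsFiniteMeasure μ] (hm : m ≤ m0) {Y Z : Ω → ℕ}
    (hY : Measurable[m] Y) (hZ : Measurable Z) {C : ℕ} (hC : ∀ᵐ ω ∂μ, Y ω ≤ C)
    (hstep : ∀ᵐ ω ∂μ, Z ω = Y ω + 1 ∨ Z ω = Y ω) (f : ℕ → ℝ) :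
    μ[fun ω => f (Z ω) | m] =ᵐ[μ] fun ω => f (Y ω) + (f (Y ω + 1) - f (Y ω)) *
      μ[{ω | Z ω = Y ω + 1}.indicator (fun _ => (1 : ℝ)) | m] ω := by
  set A := {ω | Z ω = Y ω + 1}
  set jump : Ω → ℝ := fun ω => f (Y ω + 1) - f (Y ω)
  have hY₀ : Measurable Y := hY.mono hm le_rfl
  have hfYm : StronglyMeasurable[m] fun ω => f (Y ω) :=
    (measurable_from_nat.comp hY).stronglyMeasurable
  have hjumpm : StronglyMeasurable[m] jump :=
    ((measurable_from_nat (f := fun n => f (n + 1) - f n)).comp hY).stronglyMeasurable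
  have hA : MeasurableSet A := measurableSet_eq_fun hZ (hY₀.add_const 1)
  have hfY : Integrable (fun ω => f (Y ω)) μ := integrable_comp_of_ae_le hY₀ hC f
  have hjump : Integrable jump μ :=
    integrable_comp_of_ae_le hY₀ hC (fun n => f (n + 1) - f n)
  have hI : Integrable (A.indicator fun _ => (1 : ℝ)) μ := (integrable_const 1).indicator hA
  have hjumpI : Integrable (jump * A.indicator fun _ => (1 : ℝ)) μ :=
    hjump.mul_bdd (c := 1) (stronglyMeasurable_const.indicator hA).aestronglyMeasurable
      (ae_of_all _ fun ω => by simpa using norm_indicator_le_norm_self (fun _ => (1 : ℝ)) ω)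
  have hdecomp : (fun ω => f (Z ω)) =ᵐ[μ]
      (fun ω => f (Y ω)) + jump * A.indicator fun _ => (1 : ℝ) := by
    filter_upwards [hstep] with ω hω
    rcases hω with hup | hstay
    · simp [jump, A, hup]
    · simp [jump, A, hstay]
  calc μ[fun ω => f (Z ω) | m]
      =ᵐ[μ] μ[(fun ω => f (Y ω)) + jump * A.indicator fun _ => (1 : ℝ) | m] :=
        condExp_congr_ae hdecomp
    _ =ᵐ[μ] μ[fun ω => f (Y ω) | m] + μ[jump * A.indicator fun _ => (1 : ℝ) | m] :=
        condExp_add hfY hjumpI m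
    _ =ᵐ[μ] (fun ω => f (Y ω)) + jump * μ[A.indicator fun _ => (1 : ℝ) | m] := by
        rw [condExp_of_stronglyMeasurable hm hfYm hfY]
        exact (Filter.EventuallyEq.refl _ _).add <| condExp_mul_of_stronglyMeasurable_left
          hjumpm hjumpI hI

theorem martingale_comp_of_step_le_one [IsFiniteMeasure μ] {ℱ : Filtration ℕ m0}
    {X : ℕ → Ω → ℕ} (hX : ∀ t, Measurable[ℱ t] (X t)) (hbdd : ∀ t, ∃ C, ∀ᵐ ω ∂μ, X t ω ≤ C)
    (hstep : ∀ t, ∀ᵐ ω ∂μ, X (t + 1) ω = X t ω + 1 ∨ X (t + 1) ω = X t ω) (p : ℕ → ℕ → ℝ)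
    (hp : ∀ t, μ[{ω | X (t + 1) ω = X t ω + 1}.indicator (fun _ => (1 : ℝ)) | ℱ t]
      =ᵐ[μ] fun ω => p t (X t ω))
    (g : ℕ → ℕ → ℝ) (hg : ∀ t x, g t x = g (t + 1) x + (g (t + 1) (x + 1) - g (t + 1) x) * p t x) :
    Martingale (fun t ω => g t (X t ω)) ℱ μ := by
  refine martingale_nat (fun t => (measurable_from_nat.comp (hX t)).stronglyMeasurable)
    (fun t => ?_) (fun t => ?_) <;> obtain ⟨C, hC⟩ := hbdd t
  · exact integrable_comp_of_ae_le ((hX t).mono (ℱ.le t) le_rfl) hC (g t)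
  · filter_upwards [condExp_comp_of_step_le_one (ℱ.le t) (hX t)
      ((hX (t + 1)).mono (ℱ.le _) le_rfl) hC (hstep t) (g (t + 1)), hp t] with ω hω hpω
    rw [hω, hpω, ← hg]

end StepChain

/-- For the size process `X(t)` of the tree rooted at a looping vertex `r`
(`X(r) = 1`, and `X(t+1) = X(t)+1` with conditional probability `2X(t)/(2t+1)`,
else `X(t+1) = X(t)`), the process
`X(t)(X(t)+1)⋯(X(t)+ℓ-1) / ∏_{j<ℓ} (2(t+j)+1)`, `t ≥ r`, is a martingale. -/
theorem rising_factorial_martingale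
    {Ω : Type*} {m0 : MeasurableSpace Ω} (μ : Measure Ω) [IsProbabilityMeasure μ]
    (ℱ : Filtration ℕ m0) (r : ℕ) (X : ℕ → Ω → ℕ)
    (hadp : Adapted ℱ (fun t ω => (X t ω : ℝ)))
    (hinit : ∀ ω, X r ω = 1)
    (hstep : ∀ t, r ≤ t → ∀ᵐ ω ∂μ, X (t + 1) ω = X t ω + 1 ∨ X (t + 1) ω = X t ω)
    (htrans : ∀ t, r ≤ t →
      μ[Set.indicator {ω | X (t + 1) ω = X t ω + 1} (fun _ => (1 : ℝ)) | ℱ t]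
        =ᵐ[μ] fun ω => (2 * (X t ω : ℝ)) / (2 * (t : ℝ) + 1))
    (ℓ : ℕ) :
    Martingale
      (fun s ω => (∏ j ∈ Finset.range ℓ, ((X (r + s) ω : ℝ) + j)) /
        ∏ j ∈ Finset.range ℓ, (2 * ((r : ℝ) + s + j) + 1))
      ⟨fun s => ℱ (r + s), fun _ _ hab => ℱ.mono (by omega), fun s => ℱ.le _⟩ μ := by
  have hstep' (s : ℕ) :
      ∀ᵐ ω ∂μ, X (r + s + 1) ω = X (r + s) ω + 1 ∨ X (r + s + 1) ω = X (r + s) ω :=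
    hstep (r + s) (Nat.le_add_right r s)
  have hbound (s : ℕ) : ∀ᵐ ω ∂μ, X (r + s) ω ≤ 1 + s :=
    ae_le_add_of_step_le_one (X := fun s => X (r + s)) (ae_of_all _ fun ω => (hinit ω).le) hstep' s
  refine martingale_comp_of_step_le_one
    (p := fun s x => 2 * (x : ℝ) / (2 * ((r + s : ℕ) : ℝ) + 1))
    (g := fun s x => (∏ j ∈ range ℓ, ((x : ℝ) + j)) / ∏ j ∈ range ℓ, (2 * ((r : ℝ) + s + j) + 1))
    (fun s => MeasurableEmbedding.natCast.measurable_comp_iff.1 (hadp (r + s)))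
    (fun s => ⟨1 + s, hbound s⟩) hstep' (fun s => htrans (r + s) (Nat.le_add_right r s))
    fun s x => ?_
  have key := prod_add_div_prod_odd_harmonic ℓ x (r + s) (by positivity)
  simp only [Nat.cast_succ, Nat.cast_add, add_assoc] at key ⊢
  exact key
end
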